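/- arXiv:1601.03586 — 3 statements merged into one kernel-verified Lean document; each statement's English description precedes it below -/
import Mathlib

section
/- Let d : ℤ × ℤ → ℤ be defined by d(k,l) = min(|k|,|l|) if k·l < 0 and d(k,l) = 0 otherwise. Then for all integers a, b, c one has d(a,b) = d(b,a) and d(a,b) + d(a+b,c) = d(b,c) + d(a,b+c). (These identities make the structure constants a_{λ,μ} = ∏ᵢ ξᵢ^{d(ξᵢ(λ),ξᵢ(μ))} of the relation r^λ r^μ = a_{λ,μ} r^{λ+μ} in the paper's presentation of the abelian Coulomb branch algebra commutative and associative.) -/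
set_option maxHeartbeats 1600000


/-- The structure-constant exponent of the abelian Coulomb branch algebra:
`d k l = min (|k|, |l|)` if `k` and `l` have opposite signs, and `0` otherwise. -/
def d (k l : ℤ) : ℤ := if k * l < 0 then min |k| |l| else 0

lemma d_eq (k l : ℤ) :
    d k l = if (0 < k ∧ l < 0) ∨ (k < 0 ∧ 0 < l) then min |k| |l| else 0 := by
  simp [d, mul_neg_iff]

/-- The function `d` is symmetric and satisfies the cocycle identity
`d a b + d (a+b) c = d b c + d a (b+c)`, which makes the structure constants
`a_{λ,μ} = ∏ᵢ ξᵢ^{d(ξᵢ(λ),ξᵢ(μ))}` of the abelian Coulomb branch algebra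
commutative and associative. -/
theorem d_symm_and_cocycle (a b c : ℤ) :
    d a b = d b a ∧ d a b + d (a + b) c = d b c + d a (b + c) := by
  simp only [d_eq, abs_eq_max_neg]
  constructor <;> [skip; skip] <;> split_ifs <;> omega
end

section
/- For all λ, μ ∈ ℤ^ℓ one has s(λ) · s(μ) = (∏_{i=1}^{n} Pᵢ^{d(ξᵢ(λ), ξᵢ(μ))}) · s(λ+μ) in the group algebra A. Consequently the elements s(λ), λ ∈ ℤ^ℓ, together with ℂ[t₁,…,t_ℓ], span a subalgebra of A satisfying exactly the defining relations r^λ r^μ = r^{λ+μ} ∏ᵢ ξᵢ^{d(ξᵢ(λ),ξᵢ(μ))} of the Coulomb branch algebra of the torus gauge theory ((ℂ^×)^ℓ, ⊕ᵢ ℂ_{ξᵢ}) (Theorem 'abel' of the paper, realized inside ℂ[𝔱 × T^∨] via the map 𝐳*∘ι_*^{-1}). -/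
open MvPolynomial

noncomputable section

variable (ℓ n : ℕ)

/-- The pairing `ξᵢ(λ) = Σⱼ c i j · λ j` of the `i`-th character with a coweight `λ`. -/
def xi (c : Fin n → Fin ℓ → ℤ) (i : Fin n) (lam : Fin ℓ → ℤ) : ℤ := ∑ j, c i j * lam j

/-- The linear polynomial `Pᵢ = Σⱼ (c i j) · tⱼ ∈ ℂ[t₁,…,t_ℓ]` corresponding to the
`i`-th character. -/
def P (c : Fin n → Fin ℓ → ℤ) (i : Fin n) : MvPolynomial (Fin ℓ) ℂ :=
  ∑ j, (c i j : ℂ) • X j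

/-- The element `s(λ) = (∏ᵢ Pᵢ^{max(−ξᵢ(λ),0)}) · e^λ` of the group algebra
`A = ℂ[t₁,…,t_ℓ][ℤ^ℓ]`. -/
def s (c : Fin n → Fin ℓ → ℤ) (lam : Fin ℓ → ℤ) :
    AddMonoidAlgebra (MvPolynomial (Fin ℓ) ℂ) (Fin ℓ → ℤ) :=
  AddMonoidAlgebra.single lam (∏ i, P ℓ n c i ^ (max (-(xi ℓ n c i lam)) 0).toNat)

lemma xi_add (c : Fin n → Fin ℓ → ℤ) (i : Fin n) (lam mu : Fin ℓ → ℤ) :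
    xi ℓ n c i (lam + mu) = xi ℓ n c i lam + xi ℓ n c i mu := by
  simp [xi, mul_add, Finset.sum_add_distrib]

lemma d_key (k l : ℤ) :
    (max (-k) 0).toNat + (max (-l) 0).toNat
      = (d k l).toNat + (max (-(k + l)) 0).toNat := by
  simp only [d, mul_neg_iff, Int.abs_eq_natAbs]
  split_ifs with h <;> omega

/-- The elements `s(λ)` satisfy the defining relations
`r^λ r^μ = r^{λ+μ} ∏ᵢ ξᵢ^{d(ξᵢ(λ),ξᵢ(μ))}` of the Coulomb branch algebra of the torus
gauge theory `((ℂ^×)^ℓ, ⊕ᵢ ℂ_{ξᵢ})` (Theorem `abel` of the paper). -/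
theorem abelian_coulomb_relation (c : Fin n → Fin ℓ → ℤ) (lam mu : Fin ℓ → ℤ) :
    s ℓ n c lam * s ℓ n c mu =
      algebraMap (MvPolynomial (Fin ℓ) ℂ)
          (AddMonoidAlgebra (MvPolynomial (Fin ℓ) ℂ) (Fin ℓ → ℤ))
          (∏ i, P ℓ n c i ^ (d (xi ℓ n c i lam) (xi ℓ n c i mu)).toNat) *
        s ℓ n c (lam + mu) := by
  simp only [s, AddMonoidAlgebra.single_mul_single]
  rw [show (algebraMap (MvPolynomial (Fin ℓ) ℂ)
      (AddMonoidAlgebra (MvPolynomial (Fin ℓ) ℂ) (Fin ℓ → ℤ)))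
      (∏ i, P ℓ n c i ^ (d (xi ℓ n c i lam) (xi ℓ n c i mu)).toNat)
      = AddMonoidAlgebra.single 0 (∏ i, P ℓ n c i ^ (d (xi ℓ n c i lam) (xi ℓ n c i mu)).toNat)
      from rfl, AddMonoidAlgebra.single_mul_single, zero_add]
  congr 1
  rw [← Finset.prod_mul_distrib, ← Finset.prod_mul_distrib]
  refine Finset.prod_congr rfl fun i _ => ?_
  rw [← pow_add, ← pow_add, d_key, xi_add]

end
end

section
/- For every integer N ≥ 1, the quotient ring ℂ[ξ,η,δ]/(ξ² − δη² + δ^{N−1}) is an integral domain and is integrally closed in its fraction field (i.e., it is a normal domain). (By the paper's Lemma on SL(2) and PGL(2), the Coulomb branch of a gauge theory with G = SL(2) or PGL(2) is the hypersurface ξ² = δη² − δ^{N−1} in ℂ³, a D_N-type singularity for N ≥ 4; its normality is the semisimple-rank-one local input in the paper's proof that Coulomb branches are normal.) -/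
section GenericLemmas
open Polynomial

theorem sqfree_quad {B : Type*} [CommRing B] [IsDomain B] [UniqueFactorizationMonoid B]
    {u v : B} (hu : Prime u) (hv : v ≠ 0) (h2 : (2 : B) ≠ 0) :
    Squarefree (C u * X ^ 2 - C v : B[X]) := by
  set F := FractionRing B
  have hinj : Function.Injective (algebraMap B F) := IsFractionRing.injective B F
  set ψ : B[X] →+* F[X] := mapRingHom (algebraMap B F) with hψ
  have hu' : algebraMap B F u ≠ 0 := fun h => hu.ne_zero (hinj (by simpa using h))
  have hv' : algebraMap B F v ≠ 0 := fun h => hv (hinj (by simpa using h))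
  set c : F := algebraMap B F v / algebraMap B F u with hc
  have hc0 : c ≠ 0 := div_ne_zero hv' hu'
  have h2F : (2 : F) ≠ 0 := by
    rw [← map_ofNat (algebraMap B F) 2]
    exact fun h => h2 (hinj (h.trans (map_zero _).symm))
  have hsep : (X ^ 2 - C c : F[X]).Separable :=
    separable_X_pow_sub_C c (by exact_mod_cast h2F) hc0
  have key : algebraMap B F u * c = algebraMap B F v := by
    rw [hc, mul_comm, div_mul_cancel₀ _ hu']
  have hfact : ψ (C u * X ^ 2 - C v) = C (algebraMap B F u) * (X ^ 2 - C c) := by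
    rw [mul_sub, ← C_mul, key, map_sub, hψ]
    simp
  have hsq' : Squarefree (ψ (C u * X ^ 2 - C v)) := by
    rw [hfact]
    intro x hx
    refine hsep.squarefree x (hx.trans ⟨C (algebraMap B F u)⁻¹, ?_⟩)
    rw [mul_right_comm, ← C_mul, mul_inv_cancel₀ hu', C_1, one_mul]
  intro x hx
  have hmap : ψ x * ψ x ∣ ψ (C u * X ^ 2 - C v) := by
    simpa using map_dvd ψ hx
  have hxu : IsUnit (ψ x) := hsq' _ hmap
  obtain ⟨r, hr, hrx⟩ := Polynomial.isUnit_iff.mp hxu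
  have hdeg : x.degree ≤ 0 := by
    have h' := Polynomial.degree_map_eq_of_injective hinj x
    rw [show x.map (algebraMap B F) = ψ x from rfl, ← hrx] at h'
    rw [← h']
    exact degree_C_le
  obtain ⟨x0, rfl⟩ : ∃ x0, x = C x0 := ⟨x.coeff 0, (Polynomial.eq_C_of_degree_le_zero hdeg)⟩
  rw [isUnit_C]
  have hdvd : x0 * x0 ∣ u := by
    have h := (Polynomial.C_dvd_iff_dvd_coeff (x0 * x0) (C u * X ^ 2 - C v)).mp (by rw [C_mul]; exact hx) 2
    simpa [coeff_C] using h
  obtain ⟨k, hk⟩ := hdvd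
  rw [mul_assoc] at hk
  rcases hu.irreducible.isUnit_or_isUnit hk with h | h
  · exact h
  · exact isUnit_of_mul_isUnit_left h


private lemma deg_le_one {R : Type*} [Semiring R] {r : R[X]} (h : r.degree < 2) :
    r.degree ≤ 1 := by
  by_cases h0 : r = 0
  · simp [h0]
  · rw [degree_eq_natDegree h0] at h ⊢
    have h' : r.natDegree < 2 := by exact_mod_cast h
    exact_mod_cast Nat.lt_succ_iff.mp h'

set_option maxHeartbeats 2000000 in
set_option synthInstance.maxHeartbeats 200000 in
theorem adjoinRoot_sq_normal {A : Type*} [CommRing A] [IsDomain A]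
    [UniqueFactorizationMonoid A] (f : A) (hsf : Squarefree f) (hnu : ¬ IsUnit f)
    (h2 : IsUnit (2 : A)) :
    IsDomain (AdjoinRoot (X ^ 2 - C f)) ∧ IsIntegrallyClosed (AdjoinRoot (X ^ 2 - C f)) := by
  have hq : (X ^ 2 - C f : A[X]).Monic := monic_X_pow_sub_C f (by norm_num)
  set K := FractionRing A with hK
  have hAK : Function.Injective (algebraMap A K) := IsFractionRing.injective A K
  set fK : K := algebraMap A K f with hfK
  -- f is not a square in K
  have hns : ∀ b : K, b ^ 2 ≠ fK := by
    intro b hb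
    have hint : IsIntegral A b :=
      ⟨X ^ 2 - C f, hq, by rw [eval₂_sub, eval₂_pow, eval₂_X, eval₂_C, hb, hfK, sub_self]⟩
    obtain ⟨a, ha⟩ := IsIntegrallyClosed.isIntegral_iff.mp hint
    have haf : a ^ 2 = f := hAK (by rw [map_pow, ha, hb])
    have hua : IsUnit a := hsf a (by rw [← sq]; exact haf.dvd)
    exact hnu (haf ▸ hua.pow 2)
  have hirrK : Irreducible (X ^ 2 - C fK) :=
    (X_pow_sub_C_irreducible_iff_of_prime Nat.prime_two).mpr hns
  haveI : Fact (Irreducible (X ^ 2 - C fK)) := ⟨hirrK⟩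
  have hirr : Irreducible (X ^ 2 - C f) :=
    (hq.irreducible_iff_irreducible_map_fraction_map (K := K)).mpr
      (by rwa [Polynomial.map_sub, Polynomial.map_pow, map_X, map_C])
  have hdom : IsDomain (AdjoinRoot (X ^ 2 - C f)) :=
    AdjoinRoot.isDomain_of_prime (UniqueFactorizationMonoid.irreducible_iff_prime.mp hirr)
  refine ⟨hdom, ?_⟩
  haveI := hdom
  set L := AdjoinRoot (X ^ 2 - C fK) with hL
  set θ : L := AdjoinRoot.root _ with hθdef
  have hKL : Function.Injective (algebraMap K L) := (algebraMap K L).injective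
  have hθ : θ ^ 2 = algebraMap K L fK := by
    have h0 : aeval θ (X ^ 2 - C fK) = 0 := by
      rw [hθdef, AdjoinRoot.aeval_eq, AdjoinRoot.mk_self]
    rw [map_sub, map_pow, aeval_X, aeval_C] at h0
    exact sub_eq_zero.mp h0
  have hAL : Function.Injective (algebraMap A L) := by
    rw [IsScalarTower.algebraMap_eq A K L]
    exact hKL.comp hAK
  -- representation of elements of L
  have hrep : ∀ z : L, ∃ a b : K, z = algebraMap K L a + algebraMap K L b * θ := by
    intro z
    obtain ⟨p, rfl⟩ := AdjoinRoot.mk_surjective z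
    set r := p %ₘ (X ^ 2 - C fK) with hr
    have hmon : (X ^ 2 - C fK : K[X]).Monic := monic_X_pow_sub_C fK (by norm_num)
    have hdeg : r.degree < 2 := by
      have h' := degree_modByMonic_lt p hmon
      rwa [degree_X_pow_sub_C (by norm_num) fK] at h'
    have hrw : r = C (r.coeff 1) * X + C (r.coeff 0) :=
      eq_X_add_C_of_degree_le_one (deg_le_one hdeg)
    refine ⟨r.coeff 0, r.coeff 1, ?_⟩
    have hmkr : AdjoinRoot.mk (X ^ 2 - C fK) p = AdjoinRoot.mk (X ^ 2 - C fK) r := by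
      rw [AdjoinRoot.mk_eq_mk]
      exact ⟨p /ₘ (X ^ 2 - C fK), by rw [hr, modByMonic_eq_sub_mul_div _ _]; ring⟩
    rw [hmkr]
    conv_lhs => rw [hrw]
    rw [map_add, map_mul, AdjoinRoot.mk_C, AdjoinRoot.mk_C, AdjoinRoot.mk_X]
    rw [add_comm]
    rfl
  -- uniqueness
  have huniq : ∀ a b : K, algebraMap K L a + algebraMap K L b * θ = 0 → a = 0 ∧ b = 0 := by
    intro a b h
    by_cases hb : b = 0
    · subst hb
      rw [map_zero, zero_mul, add_zero] at h
      exact ⟨hKL (by rw [h, map_zero]), rfl⟩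
    · exfalso
      have hbL : algebraMap K L b ≠ 0 := fun hh => hb (hKL (by rw [hh, map_zero]))
      have hcalc : b * -(a / b) = -a := by
        rw [mul_neg, mul_div_assoc', mul_comm, mul_div_assoc, div_self hb, mul_one]
      have hθeq : θ = algebraMap K L (-(a / b)) := by
        apply mul_left_cancel₀ hbL
        rw [← map_mul, hcalc, map_neg]
        linear_combination h
      apply hns (-(a / b))
      apply hKL
      rw [map_pow, ← hθeq, hθ]
  -- the map φ : AdjoinRoot (X² - C f) → L
  have hq2 : Polynomial.eval₂ (algebraMap A L) θ (X ^ 2 - C f) = 0 := by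
    rw [eval₂_sub, eval₂_pow, eval₂_X, eval₂_C, IsScalarTower.algebraMap_apply A K L, ← hfK, hθ]
    exact sub_self _
  set φ : AdjoinRoot (X ^ 2 - C f) →+* L := AdjoinRoot.lift (algebraMap A L) θ hq2 with hφ
  have φof : ∀ a : A, φ (algebraMap A _ a) = algebraMap A L a := by
    intro a
    rw [AdjoinRoot.algebraMap_eq, hφ, AdjoinRoot.lift_of]
  have φmk : ∀ a b : A, φ (AdjoinRoot.mk _ (C a + C b * X)) =
      algebraMap A L a + algebraMap A L b * θ := by
    intro a b
    rw [hφ, AdjoinRoot.lift_mk]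
    rw [eval₂_add, eval₂_mul, eval₂_C, eval₂_C, eval₂_X]
  have hφinj : Function.Injective φ := by
    rw [injective_iff_map_eq_zero]
    intro z hz
    obtain ⟨p, rfl⟩ := AdjoinRoot.mk_surjective z
    set r := p %ₘ (X ^ 2 - C f) with hr
    have hdeg : r.degree < 2 := by
      have h' := degree_modByMonic_lt p hq
      rwa [degree_X_pow_sub_C (by norm_num) f] at h'
    have hrw : r = C (r.coeff 1) * X + C (r.coeff 0) :=
      eq_X_add_C_of_degree_le_one (deg_le_one hdeg)
    have hmkr : AdjoinRoot.mk (X ^ 2 - C f) p = AdjoinRoot.mk (X ^ 2 - C f) r := by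
      rw [AdjoinRoot.mk_eq_mk]
      exact ⟨p /ₘ (X ^ 2 - C f), by rw [hr, modByMonic_eq_sub_mul_div _ _]; ring⟩
    rw [hmkr] at hz ⊢
    conv at hz => rw [hrw]
    have hz' : algebraMap A L (r.coeff 0) + algebraMap A L (r.coeff 1) * θ = 0 := by
      rw [← φmk]
      rw [show C (r.coeff 0) + C (r.coeff 1) * X = C (r.coeff 1) * X + C (r.coeff 0) by ring]
      exact hz
    have h01 := huniq (algebraMap A K (r.coeff 0)) (algebraMap A K (r.coeff 1))
      (by rw [← IsScalarTower.algebraMap_apply, ← IsScalarTower.algebraMap_apply]; exact hz')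
    have hc0 : r.coeff 0 = 0 := hAK (by rw [h01.1, map_zero])
    have hc1 : r.coeff 1 = 0 := hAK (by rw [h01.2, map_zero])
    rw [hrw, hc0, hc1]
    simp
  letI : Algebra (AdjoinRoot (X ^ 2 - C f)) L := φ.toAlgebra
  have halg : (algebraMap (AdjoinRoot (X ^ 2 - C f)) L) = φ := rfl
  letI : IsScalarTower A (AdjoinRoot (X ^ 2 - C f)) L :=
    IsScalarTower.of_algebraMap_eq fun x => (φof x).symm
  haveI hfrac : IsFractionRing (AdjoinRoot (X ^ 2 - C f)) L := by
    refine ⟨?_, ?_, ?_⟩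
    · rintro ⟨s, hs⟩
      apply isUnit_iff_ne_zero.mpr
      intro h0
      exact nonZeroDivisors.ne_zero hs (hφinj (by rw [show φ s = 0 from h0, map_zero]))
    · intro z
      obtain ⟨a, b, rfl⟩ := hrep z
      obtain ⟨d₁, n₁, h₁⟩ := IsLocalization.exists_integer_multiple (nonZeroDivisors A) a
      obtain ⟨d₂, n₂, h₂⟩ := IsLocalization.exists_integer_multiple (nonZeroDivisors A) b
      have h₁' : algebraMap A K n₁ = algebraMap A K (↑d₁) * a := by
        rw [h₁, Algebra.smul_def]
      have h₂' : algebraMap A K n₂ = algebraMap A K (↑d₂) * b := by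
        rw [h₂, Algebra.smul_def]
      have hdne : algebraMap A (AdjoinRoot (X ^ 2 - C f)) (↑d₁ * ↑d₂) ≠ 0 := by
        intro h0
        have : algebraMap A L (↑d₁ * ↑d₂) = 0 := by rw [← φof, h0, map_zero]
        exact mul_ne_zero (nonZeroDivisors.ne_zero d₁.2) (nonZeroDivisors.ne_zero d₂.2)
          (hAL (by rw [this, map_zero]))
      refine ⟨⟨AdjoinRoot.mk _ (C (n₁ * ↑d₂) + C (n₂ * ↑d₁) * X),
        ⟨algebraMap A _ (↑d₁ * ↑d₂), mem_nonZeroDivisors_of_ne_zero hdne⟩⟩, ?_⟩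
      rw [halg, φof, φmk]
      rw [IsScalarTower.algebraMap_apply A K L, IsScalarTower.algebraMap_apply A K L (n₁ * ↑d₂),
        IsScalarTower.algebraMap_apply A K L (n₂ * ↑d₁)]
      rw [map_mul (algebraMap A K) n₁, map_mul (algebraMap A K) n₂, h₁', h₂',
        map_mul (algebraMap A K) (↑d₁ : A)]
      simp only [map_mul]
      ring
    · intro x y h
      exact ⟨1, by rw [OneMemClass.coe_one, one_mul, one_mul]; exact hφinj h⟩
  haveI : Module.Finite A (AdjoinRoot (X ^ 2 - C f)) :=
    Module.Finite.of_basis (AdjoinRoot.powerBasis' hq).basis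
  refine (isIntegrallyClosed_iff L).mpr ?_
  rintro x hx
  have hxA : IsIntegral A x := isIntegral_trans x hx
  obtain ⟨a, b, rfl⟩ := hrep x
  -- the conjugation automorphism
  have hσ0 : aeval (-θ) (X ^ 2 - C fK : K[X]) = 0 := by
    rw [map_sub, map_pow, aeval_X, aeval_C, neg_pow, hθ]
    simp
  set σ : L →ₐ[K] L := AdjoinRoot.liftAlgHom _ (Algebra.ofId K L) (-θ) hσ0 with hσdef
  have hroot : σ θ = -θ := AdjoinRoot.liftAlgHom_root _ (Algebra.ofId K L) (-θ) hσ0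
  have hσ : σ (algebraMap K L a + algebraMap K L b * θ) =
      algebraMap K L a - algebraMap K L b * θ := by
    rw [map_add, map_mul, AlgHom.commutes, AlgHom.commutes, hroot]
    ring
  have hconj : IsIntegral A (σ (algebraMap K L a + algebraMap K L b * θ)) :=
    hxA.map (σ.restrictScalars A)
  -- trace: a ∈ A
  have hsum : IsIntegral A (algebraMap K L (a + a)) := by
    have h' := hxA.add hconj
    rwa [hσ, show (algebraMap K L a + algebraMap K L b * θ) +
      (algebraMap K L a - algebraMap K L b * θ) = algebraMap K L (a + a) by
        rw [map_add]; ring] at h'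
  obtain ⟨a₂, ha₂⟩ := IsIntegrallyClosed.isIntegral_iff.mp
    ((isIntegral_algebraMap_iff hKL).mp hsum)
  -- norm: a² - b²f ∈ A
  have hprod : IsIntegral A (algebraMap K L (a * a - b * b * fK)) := by
    have h' := hxA.mul hconj
    rwa [hσ, show (algebraMap K L a + algebraMap K L b * θ) *
      (algebraMap K L a - algebraMap K L b * θ) = algebraMap K L (a * a - b * b * fK) by
        rw [map_sub, map_mul, map_mul, map_mul, ← hθ]; ring] at h'
  obtain ⟨m, hm⟩ := IsIntegrallyClosed.isIntegral_iff.mp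
    ((isIntegral_algebraMap_iff hKL).mp hprod)
  -- recover a
  set a' : A := ↑h2.unit⁻¹ * a₂ with ha'
  have hu2 : (↑h2.unit⁻¹ : A) * 2 = 1 := h2.val_inv_mul
  have haa : algebraMap A K a' = a := by
    have h2a : algebraMap A K a₂ = algebraMap A K 2 * a := by
      rw [ha₂, map_ofNat]; ring
    rw [ha', map_mul, h2a, ← mul_assoc, ← map_mul, hu2, map_one, one_mul]
  -- recover b
  have hbf : b * b * fK = algebraMap A K (a' * a' - m) := by
    rw [map_sub, map_mul, haa, hm]
    ring
  obtain ⟨n, d, hrel, hmkn⟩ := IsFractionRing.exists_reduced_fraction A b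
  have hbd : b * algebraMap A K (↑d) = algebraMap A K n := by
    rw [← hmkn, IsLocalization.mk'_spec]
  have hmain : f * (n * n) = (a' * a' - m) * (↑d * ↑d) := by
    apply hAK
    rw [map_mul, map_mul, map_mul, map_mul, ← hbd, ← hfK, ← hbf]
    ring
  have hd2 : (↑d : A) * ↑d ∣ f := by
    have hdvd : (↑d : A) * ↑d ∣ f * (n * n) := ⟨a' * a' - m, by rw [hmain]; ring⟩
    have hrp : IsRelPrime ((↑d : A) * ↑d) (n * n) := by
      have h' := (hrel.symm.pow (m := 2) (n := 2))
      rwa [pow_two, pow_two] at h'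
    exact hrp.dvd_of_dvd_mul_right hdvd
  have hdu : IsUnit (↑d : A) := hsf _ hd2
  set b' : A := ↑hdu.unit⁻¹ * n with hb'
  have hud : (↑hdu.unit⁻¹ : A) * ↑d = 1 := hdu.val_inv_mul
  have hbb : algebraMap A K b' = b := by
    rw [hb', map_mul, ← hbd, ← mul_assoc, mul_comm (algebraMap A K ↑hdu.unit⁻¹) b, mul_assoc,
      ← map_mul, hud, map_one, mul_one]
  refine ⟨AdjoinRoot.mk _ (C a' + C b' * X), ?_⟩
  rw [halg, φmk, IsScalarTower.algebraMap_apply A K L, IsScalarTower.algebraMap_apply A K L b',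
    haa, hbb]

end GenericLemmas


open MvPolynomial

/-- The Coulomb branch hypersurface `ξ² = δη² − δ^{N−1}` of an `SL(2)` or `PGL(2)`
gauge theory: the quotient of `ℂ[ξ,η,δ]` by the ideal generated by `ξ² − δη² + δ^{N−1}`
(where `ξ = X 0`, `η = X 1`, `δ = X 2`). -/
noncomputable abbrev CoulombDN (N : ℕ) : Type :=
  MvPolynomial (Fin 3) ℂ ⧸
    Ideal.span {(X 0 ^ 2 - X 2 * X 1 ^ 2 + X 2 ^ (N - 1) : MvPolynomial (Fin 3) ℂ)}


private lemma squarefree_of_mulEquiv {M N : Type*} [CommMonoid M] [CommMonoid N] (e : M ≃* N)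
    {x : M} (h : Squarefree (e x)) : Squarefree x := by
  intro y hy
  have hy' : e y * e y ∣ e x := by
    obtain ⟨c, hc⟩ := hy
    exact ⟨e c, by rw [← map_mul, ← map_mul, hc]⟩
  have h2 := (h (e y) hy').map e.symm.toMonoidHom
  simpa using h2

private theorem isIntegrallyClosed_of_ringEquiv {R S : Type*} [CommRing R] [CommRing S]
    [IsDomain S] [IsIntegrallyClosed S] (E : R ≃+* S) : IsIntegrallyClosed R := by
  haveI : IsDomain R := Function.Injective.isDomain (E : R →+* S) E.injective
  let L := FractionRing S
  letI : Algebra R L := ((algebraMap S L).comp (E : R →+* S)).toAlgebra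
  haveI : IsFractionRing R L :=
    (IsFractionRing.isFractionRing_iff_of_base_ringEquiv (S := L) E.symm).mp
      (inferInstance : IsFractionRing S L)
  refine (isIntegrallyClosed_iff L).mpr ?_
  rintro x ⟨p, pmonic, hp⟩
  have hxS : IsIntegral S x := ⟨p.map (E : R →+* S), pmonic.map _, by
    rw [Polynomial.eval₂_map]; exact hp⟩
  obtain ⟨y, hy⟩ := IsIntegrallyClosed.isIntegral_iff.mp hxS
  refine ⟨E.symm y, ?_⟩
  show ((algebraMap S L).comp (E : R →+* S)) (E.symm y) = x
  rw [RingHom.comp_apply, show (E : R →+* S) (E.symm y) = y from E.apply_symm_apply y, hy]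

-- concrete computations
section Concrete
variable (N : ℕ)

private noncomputable abbrev fA : MvPolynomial (Fin 2) ℂ := X 1 * X 0 ^ 2 - X 1 ^ (N - 1)

private lemma prime_u : Prime (X 0 : MvPolynomial (Fin 1) ℂ) := by
  rw [← MulEquiv.prime_iff (MvPolynomial.finSuccEquiv ℂ 0).toMulEquiv]
  have : (MvPolynomial.finSuccEquiv ℂ 0).toMulEquiv (X 0) = Polynomial.X := by
    show MvPolynomial.finSuccEquiv ℂ 0 (X 0) = Polynomial.X
    exact finSuccEquiv_X_zero
  rw [this]
  exact Polynomial.prime_X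

private lemma e2_fA : MvPolynomial.finSuccEquiv ℂ 1 (fA N) =
    Polynomial.C (X 0 : MvPolynomial (Fin 1) ℂ) * Polynomial.X ^ 2 -
      Polynomial.C ((X 0 : MvPolynomial (Fin 1) ℂ) ^ (N - 1)) := by
  rw [show fA N = X 1 * X 0 ^ 2 - X 1 ^ (N - 1) from rfl]
  rw [map_sub, map_mul, map_pow, map_pow,
    show (X 1 : MvPolynomial (Fin 2) ℂ) = X (Fin.succ 0) from rfl,
    finSuccEquiv_X_zero, finSuccEquiv_X_succ, ← Polynomial.C_pow]

private lemma h2B : (2 : MvPolynomial (Fin 1) ℂ) ≠ 0 := by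
  rw [← map_ofNat (algebraMap ℂ (MvPolynomial (Fin 1) ℂ)) 2]
  intro h
  have := (MvPolynomial.C_eq_zero (σ := Fin 1)).mp h
  norm_num at this

private lemma hsfA : Squarefree (fA N) := by
  apply squarefree_of_mulEquiv (MvPolynomial.finSuccEquiv ℂ 1).toMulEquiv
  have := e2_fA N
  rw [show (MvPolynomial.finSuccEquiv ℂ 1).toMulEquiv (fA N)
      = MvPolynomial.finSuccEquiv ℂ 1 (fA N) from rfl, this]
  exact sqfree_quad (prime_u) (pow_ne_zero _ (prime_u).ne_zero) h2B

private lemma hnuA : ¬ IsUnit (fA N) := by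
  intro h
  have h' := h.map (MvPolynomial.finSuccEquiv ℂ 1)
  rw [e2_fA] at h'
  obtain ⟨r, hr, hCr⟩ := Polynomial.isUnit_iff.mp h'
  have hcoeff : (Polynomial.C (X 0 : MvPolynomial (Fin 1) ℂ) * Polynomial.X ^ 2 -
      Polynomial.C ((X 0 : MvPolynomial (Fin 1) ℂ) ^ (N - 1))).coeff 2 = X 0 := by
    rw [Polynomial.coeff_sub, Polynomial.coeff_C_mul, Polynomial.coeff_X_pow, if_pos rfl,
      Polynomial.coeff_C]
    norm_num
  have h0 := congrArg (fun q => Polynomial.coeff q 2) hCr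
  simp only [hcoeff, Polynomial.coeff_C] at h0
  norm_num at h0
  exact (prime_u).ne_zero h0.symm

private lemma h2A : IsUnit (2 : MvPolynomial (Fin 2) ℂ) := by
  rw [← map_ofNat (algebraMap ℂ (MvPolynomial (Fin 2) ℂ)) 2]
  exact (isUnit_iff_ne_zero.mpr two_ne_zero).map _

end Concrete

/-- For every integer `N ≥ 1`, the ring `ℂ[ξ,η,δ]/(ξ² − δη² + δ^{N−1})` is an integral
domain and is integrally closed in its fraction field, i.e. a normal domain. -/
theorem coulombDN_isDomain_isIntegrallyClosed (N : ℕ) (hN : 1 ≤ N) :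
    IsDomain (CoulombDN N) ∧ IsIntegrallyClosed (CoulombDN N) := by
  obtain ⟨hdom, hic⟩ := adjoinRoot_sq_normal (fA N) (hsfA N) (hnuA N) h2A
  haveI := hdom
  haveI := hic
  have hep : (MvPolynomial.finSuccEquiv ℂ 2).toRingEquiv
      (X 0 ^ 2 - X 2 * X 1 ^ 2 + X 2 ^ (N - 1) : MvPolynomial (Fin 3) ℂ)
      = Polynomial.X ^ 2 - Polynomial.C (fA N) := by
    show MvPolynomial.finSuccEquiv ℂ 2 _ = _
    rw [map_add, map_sub, map_pow, map_mul, map_pow, map_pow, finSuccEquiv_X_zero,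
      show (X 1 : MvPolynomial (Fin 3) ℂ) = X (Fin.succ 0) from rfl,
      show (X 2 : MvPolynomial (Fin 3) ℂ) = X (Fin.succ 1) from rfl,
      finSuccEquiv_X_succ, finSuccEquiv_X_succ,
      ← Polynomial.C_pow, ← Polynomial.C_pow, ← Polynomial.C_mul, sub_add, ← Polynomial.C_sub]
  let E : CoulombDN N ≃+* AdjoinRoot (Polynomial.X ^ 2 - Polynomial.C (fA N)) :=
    Ideal.quotientEquiv _ _ (MvPolynomial.finSuccEquiv ℂ 2).toRingEquiv
      (by rw [Ideal.map_span, Set.image_singleton]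
          exact congrArg (fun q => Ideal.span {q}) hep.symm)
  exact ⟨Function.Injective.isDomain E E.injective,
    isIntegrallyClosed_of_ringEquiv E⟩
end
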